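/- arXiv:1902.10770 — 4 statements merged into one kernel-verified Lean document; each statement's English description precedes it below -/
import Mathlib

section
/- Soundness of canonical abstraction with respect to embedding (Proposition 1): for every 2-valued structure C = (U, ι) over a signature P, the canonical-name map f : U → U' defined by f(u) = canon(u), where U' is the universe of the canonical abstraction β(C), is surjective onto U' and satisfies the embedding condition for every predicate symbol and every tuple; hence C ⊑ β(C). -/
open scoped Classical

/-- Kleene three-valued truth values: 0, 1/2, 1. -/
inductive Kleene : Type
  | zero
  | half
  | one
  deriving DecidableEq

namespace Kleene

/-- The information order on Kleene values: `l1 ≼ l2` iff `l1 = l2` or `l2 = 1/2`. -/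
def le (a b : Kleene) : Prop := a = b ∨ b = half

/-- The Kleene join: `l1 ⊔ l2 = l1` if `l1 = l2`, and `1/2` otherwise. -/
def join (a b : Kleene) : Kleene := if a = b then a else half

/-- Booleans regarded as (definite) Kleene values: `0 ↦ 0`, `1 ↦ 1`. -/
def ofBool (b : Bool) : Kleene := if b then one else zero

end Kleene

/-- A signature: a type of predicate symbols with an arity function. -/
structure Signature where
  P : Type
  ar : P → ℕ

/-- A 2-valued structure over a signature: a nonempty finite universe together with a
Boolean interpretation of each predicate symbol on tuples (of length the arity). -/
structure TwoStruct (σ : Signature) where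
  U : Type
  [uNe : Nonempty U]
  [uFin : Finite U]
  ι : (p : σ.P) → (Fin (σ.ar p) → U) → Bool

/-- A 3-valued structure over a signature: a nonempty finite universe together with a
Kleene-valued interpretation of each predicate symbol. -/
structure ThreeStruct (σ : Signature) where
  U : Type
  [uNe : Nonempty U]
  [uFin : Finite U]
  ι : (p : σ.P) → (Fin (σ.ar p) → U) → Kleene

attribute [instance] TwoStruct.uNe TwoStruct.uFin ThreeStruct.uNe ThreeStruct.uFin

/-- The canonical name of an element of a 2-valued structure: the set of unary predicate
symbols whose interpretation at the element is true. -/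
def TwoStruct.canon {σ : Signature} (C : TwoStruct σ) (u : C.U) : Set σ.P :=
  {p | σ.ar p = 1 ∧ C.ι p (fun _ => u) = true}

/-- The canonical name of an element of a 3-valued structure: the set of unary predicate
symbols whose interpretation at the element is 1. -/
def ThreeStruct.canon {σ : Signature} (S : ThreeStruct σ) (c : S.U) : Set σ.P :=
  {p | σ.ar p = 1 ∧ S.ι p (fun _ => c) = Kleene.one}

/-- The canonical abstraction `β(C)` of a 2-valued structure `C`: the universe is the set of
canonical names of elements of `C`, and the interpretation of a predicate at a tuple of
canonical names is the Kleene join of the (nonempty) family of interpretations in `C` over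
all tuples of representatives: 1 if all representatives give true, 0 if all give false,
and 1/2 otherwise. -/
noncomputable def TwoStruct.beta {σ : Signature} (C : TwoStruct σ) : ThreeStruct σ where
  U := ↥(Set.range C.canon)
  uNe := ⟨⟨C.canon (Classical.arbitrary C.U), ⟨Classical.arbitrary C.U, rfl⟩⟩⟩
  uFin := (Set.finite_range C.canon).to_subtype
  ι := fun p c =>
    if ∀ t : Fin (σ.ar p) → C.U, (∀ i, C.canon (t i) = (c i).1) → C.ι p t = true then
      Kleene.one
    else if ∀ t : Fin (σ.ar p) → C.U, (∀ i, C.canon (t i) = (c i).1) → C.ι p t = false then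
      Kleene.zero
    else Kleene.half

/-- Embedding of a 2-valued structure into a 3-valued structure: there is a surjection `f`
of universes such that for every predicate and tuple, the concrete truth value equals the
abstract one, or the abstract one is 1/2. -/
def Embeds {σ : Signature} (C : TwoStruct σ) (S : ThreeStruct σ) : Prop :=
  ∃ f : C.U → S.U, Function.Surjective f ∧
    ∀ (p : σ.P) (t : Fin (σ.ar p) → C.U),
      Kleene.ofBool (C.ι p t) = S.ι p (fun i => f (t i)) ∨
        S.ι p (fun i => f (t i)) = Kleene.half

/-- **Proposition 1 (soundness of canonical abstraction w.r.t. embedding).**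
For every 2-valued structure `C`, the canonical-name map `u ↦ canon(u)` into the universe
of `β(C)` is surjective, satisfies the embedding condition for every predicate symbol and
every tuple, and hence `C ⊑ β(C)`. -/
theorem canonical_abstraction_sound {σ : Signature} (C : TwoStruct σ) :
    Function.Surjective (fun u => (⟨C.canon u, ⟨u, rfl⟩⟩ : C.beta.U)) ∧
    (∀ (p : σ.P) (t : Fin (σ.ar p) → C.U),
      Kleene.ofBool (C.ι p t) =
          C.beta.ι p (fun i => (⟨C.canon (t i), ⟨t i, rfl⟩⟩ : C.beta.U)) ∨
        C.beta.ι p (fun i => (⟨C.canon (t i), ⟨t i, rfl⟩⟩ : C.beta.U)) = Kleene.half) ∧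
    Embeds C C.beta := by
  have hsurj : Function.Surjective (fun u => (⟨C.canon u, ⟨u, rfl⟩⟩ : C.beta.U)) := by
    rintro ⟨c, u, rfl⟩
    exact ⟨u, rfl⟩
  have hemb : ∀ (p : σ.P) (t : Fin (σ.ar p) → C.U),
      Kleene.ofBool (C.ι p t) =
          C.beta.ι p (fun i => (⟨C.canon (t i), ⟨t i, rfl⟩⟩ : C.beta.U)) ∨
        C.beta.ι p (fun i => (⟨C.canon (t i), ⟨t i, rfl⟩⟩ : C.beta.U)) = Kleene.half := by
    intro p t
    show Kleene.ofBool (C.ι p t) =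
        (if ∀ t' : Fin (σ.ar p) → C.U,
            (∀ i, C.canon (t' i) = C.canon (t i)) → C.ι p t' = true then Kleene.one
         else if ∀ t' : Fin (σ.ar p) → C.U,
            (∀ i, C.canon (t' i) = C.canon (t i)) → C.ι p t' = false then Kleene.zero
         else Kleene.half) ∨
        (if ∀ t' : Fin (σ.ar p) → C.U,
            (∀ i, C.canon (t' i) = C.canon (t i)) → C.ι p t' = true then Kleene.one
         else if ∀ t' : Fin (σ.ar p) → C.U,
            (∀ i, C.canon (t' i) = C.canon (t i)) → C.ι p t' = false then Kleene.zero
         else Kleene.half) = Kleene.half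
    split_ifs with h1 h2
    · left
      have := h1 t (fun i => rfl)
      simp [Kleene.ofBool, this]
    · left
      have := h2 t (fun i => rfl)
      simp [Kleene.ofBool, this]
    · right; rfl
  exact ⟨hsurj, hemb, _, hsurj, hemb⟩
end

section
/- Forced form and uniqueness of embedding functions (key step in the proof of Proposition 2): let C = (U, ι) and D be 2-valued structures over the same signature, and suppose f : U → U' witnesses an embedding of C into the canonical abstraction β(D) = (U', ι'). Then f(u) = canon(u) for every u ∈ U (where canon is the canonical-name map of C); in particular, there is at most one function witnessing an embedding of C into β(D). -/
open scoped Classical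

theorem forced_aux {σ : Signature} (C D : TwoStruct σ)
    (f : C.U → D.beta.U)
    (hemb : ∀ (p : σ.P) (t : Fin (σ.ar p) → C.U),
        Kleene.ofBool (C.ι p t) = D.beta.ι p (fun i => f (t i)) ∨
          D.beta.ι p (fun i => f (t i)) = Kleene.half)
    (u : C.U) : (f u).1 = C.canon u := by
  obtain ⟨d, hd⟩ := (f u).2
  ext p
  by_cases h1 : σ.ar p = 1
  · have i0 : Fin (σ.ar p) := ⟨0, by omega⟩
    haveI hsub : Subsingleton (Fin (σ.ar p)) := by rw [h1]; infer_instance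
    have hvt : ∀ t : Fin (σ.ar p) → D.U, (∀ i, D.canon (t i) = (f u).1) →
        (D.ι p t = true ↔ p ∈ (f u).1) := by
      intro t ht
      have htq : t = fun _ => t i0 := funext fun i => by rw [Subsingleton.elim i i0]
      rw [htq, ← ht i0]
      exact ⟨fun h => ⟨h1, h⟩, fun h => h.2⟩
    have hbeta : D.beta.ι p (fun _ : Fin (σ.ar p) => f u) =
        (if p ∈ (f u).1 then Kleene.one else Kleene.zero) := by
      by_cases hmem : p ∈ (f u).1
      · rw [if_pos hmem]
        show (if ∀ t : Fin (σ.ar p) → D.U,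
            (∀ i, D.canon (t i) = (f u).1) → D.ι p t = true then Kleene.one
          else if ∀ t : Fin (σ.ar p) → D.U,
            (∀ i, D.canon (t i) = (f u).1) → D.ι p t = false then Kleene.zero
          else Kleene.half) = Kleene.one
        rw [if_pos]
        intro t ht
        exact (hvt t ht).2 hmem
      · rw [if_neg hmem]
        show (if ∀ t : Fin (σ.ar p) → D.U,
            (∀ i, D.canon (t i) = (f u).1) → D.ι p t = true then Kleene.one
          else if ∀ t : Fin (σ.ar p) → D.U,
            (∀ i, D.canon (t i) = (f u).1) → D.ι p t = false then Kleene.zero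
          else Kleene.half) = Kleene.zero
        rw [if_neg, if_pos]
        · intro t ht
          cases hb : D.ι p t with
          | false => rfl
          | true => exact absurd ((hvt t ht).1 hb) hmem
        · intro hall
          exact hmem ((hvt (fun _ => d) (fun i => hd)).1 (hall (fun _ => d) (fun i => hd)))
    have hC : C.ι p (fun _ => u) = true ↔ p ∈ (f u).1 := by
      rcases hemb p (fun _ => u) with h | h
      · rw [hbeta] at h
        by_cases hmem : p ∈ (f u).1 <;>
          cases hb : C.ι p (fun _ => u) <;>
            simp [hb, hmem, Kleene.ofBool] at h ⊢
      · rw [hbeta] at h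
        by_cases hmem : p ∈ (f u).1 <;> simp [hmem] at h
    constructor
    · intro hp
      exact ⟨h1, hC.2 hp⟩
    · intro hp
      exact hC.1 hp.2
  · constructor
    · intro hp
      rw [← hd] at hp
      exact absurd hp.1 h1
    · intro hp
      exact absurd hp.1 h1

/-- **Forced form and uniqueness of embedding functions.** If `f` witnesses an embedding of
a 2-valued structure `C` into the canonical abstraction `β(D)` of a 2-valued structure `D`
(i.e. `f` is surjective and satisfies the embedding condition), then `f(u) = canon(u)` for
every `u` in the universe of `C`; in particular there is at most one function witnessing
an embedding of `C` into `β(D)`. -/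
theorem embedding_function_forced {σ : Signature} (C D : TwoStruct σ) :
    (∀ f : C.U → D.beta.U,
      Function.Surjective f →
      (∀ (p : σ.P) (t : Fin (σ.ar p) → C.U),
        Kleene.ofBool (C.ι p t) = D.beta.ι p (fun i => f (t i)) ∨
          D.beta.ι p (fun i => f (t i)) = Kleene.half) →
      ∀ u : C.U, (f u).1 = C.canon u) ∧
    (∀ f g : C.U → D.beta.U,
      Function.Surjective f →
      (∀ (p : σ.P) (t : Fin (σ.ar p) → C.U),
        Kleene.ofBool (C.ι p t) = D.beta.ι p (fun i => f (t i)) ∨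
          D.beta.ι p (fun i => f (t i)) = Kleene.half) →
      Function.Surjective g →
      (∀ (p : σ.P) (t : Fin (σ.ar p) → C.U),
        Kleene.ofBool (C.ι p t) = D.beta.ι p (fun i => g (t i)) ∨
          D.beta.ι p (fun i => g (t i)) = Kleene.half) →
      f = g) := by
  constructor
  · intro f _ hemb u
    exact forced_aux C D f hemb u
  · intro f g hf hfe hg hge
    funext u
    exact Subtype.ext ((forced_aux C D f hfe u).trans (forced_aux C D g hge u).symm)
end

section
/- Decision characterization of embedding into a canonical abstraction (the mathematical content of Proposition 2): let C = (U, ι) and D be 2-valued structures over the same signature and let β(D) = (U', ι'). Then C ⊑ β(D) if and only if (i) the image of the canonical-name map of C equals U', i.e., {canon(u) : u ∈ U} = U', and (ii) for every predicate symbol p of arity k and all u1,…,uk ∈ U, either ι(p)(u1,…,uk) = ι'(p)(canon(u1),…,canon(uk)) or ι'(p)(canon(u1),…,canon(uk)) = 1/2. -/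
open scoped Classical

lemma beta_unary {σ : Signature} (D : TwoStruct σ) (p : σ.P) (hp : σ.ar p = 1)
    (c : D.beta.U) :
    D.beta.ι p (fun _ => c) = if p ∈ c.1 then Kleene.one else Kleene.zero := by
  have hjk : ∀ j k : Fin (σ.ar p), j = k := by
    intro j k
    have h1 := j.isLt; have h2 := k.isLt
    exact Fin.ext (by omega)
  have i0 : Fin (σ.ar p) := ⟨0, by omega⟩
  have hconst : ∀ t : Fin (σ.ar p) → D.U, t = fun _ => t i0 := by
    intro t; funext j; rw [hjk j i0]
  show (if ∀ t : Fin (σ.ar p) → D.U, (∀ i, D.canon (t i) = c.1) → D.ι p t = true then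
      Kleene.one
    else if ∀ t : Fin (σ.ar p) → D.U, (∀ i, D.canon (t i) = c.1) → D.ι p t = false then
      Kleene.zero
    else Kleene.half) = _
  by_cases hpc : p ∈ c.1
  · rw [if_pos, if_pos hpc]
    intro t ht
    rw [hconst t]
    have : p ∈ D.canon (t i0) := (ht i0).symm ▸ hpc
    exact this.2
  · obtain ⟨d, hd⟩ := c.2
    have hfalse : ∀ t : Fin (σ.ar p) → D.U, (∀ i, D.canon (t i) = c.1) → D.ι p t = false := by
      intro t ht
      by_contra hne
      have htrue : D.ι p t = true := by
        cases h : D.ι p t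
        · exact absurd h hne
        · rfl
      apply hpc
      rw [← ht i0]
      exact ⟨hp, by rw [← hconst t]; exact htrue⟩
    rw [if_neg, if_pos hfalse, if_neg hpc]
    intro hall
    have ha := hall (fun _ => d) (fun i => hd)
    have hb := hfalse (fun _ => d) (fun i => hd)
    rw [ha] at hb
    exact Bool.noConfusion hb

lemma embed_canon {σ : Signature} (C D : TwoStruct σ) (f : C.U → D.beta.U)
    (hf : ∀ (p : σ.P) (t : Fin (σ.ar p) → C.U),
      Kleene.ofBool (C.ι p t) = D.beta.ι p (fun i => f (t i)) ∨
        D.beta.ι p (fun i => f (t i)) = Kleene.half)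
    (u : C.U) : (f u).1 = C.canon u := by
  ext p
  constructor
  · intro hpf
    obtain ⟨d, hd⟩ := (f u).2
    have hp : σ.ar p = 1 := by rw [← hd] at hpf; exact hpf.1
    have := hf p (fun _ => u)
    rw [beta_unary D p hp (f u), if_pos hpf] at this
    rcases this with h | h
    · refine ⟨hp, ?_⟩
      cases hb : C.ι p (fun _ => u)
      · rw [hb] at h; exact absurd h (by simp [Kleene.ofBool])
      · rfl
    · exact absurd h (by simp)
  · rintro ⟨hp, hb⟩
    have := hf p (fun _ => u)
    rw [beta_unary D p hp (f u)] at this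
    by_cases hpf : p ∈ (f u).1
    · exact hpf
    · rw [if_neg hpf] at this
      rw [hb] at this
      rcases this with h | h
      · exact absurd h (by simp [Kleene.ofBool])
      · exact absurd h (by simp)

/-- **Decision characterization of embedding into a canonical abstraction (Proposition 2).**
For 2-valued structures `C` and `D` over the same signature, `C ⊑ β(D)` iff
(i) the image of the canonical-name map of `C` equals the universe of `β(D)`, i.e.
`{canon(u) : u ∈ U_C} = {canon(v) : v ∈ U_D}`, and
(ii) for every predicate `p` and every tuple `u⃗` of elements of `C`, either
`ι(p)(u⃗) = ι'(p)(canon(u1),…,canon(uk))` or `ι'(p)(canon(u1),…,canon(uk)) = 1/2`. -/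
theorem embeds_beta_iff {σ : Signature} (C D : TwoStruct σ) :
    Embeds C D.beta ↔
      Set.range C.canon = Set.range D.canon ∧
      ∀ (p : σ.P) (t : Fin (σ.ar p) → C.U)
        (h : ∀ i, C.canon (t i) ∈ Set.range D.canon),
        Kleene.ofBool (C.ι p t) =
            D.beta.ι p (fun i => (⟨C.canon (t i), h i⟩ : D.beta.U)) ∨
          D.beta.ι p (fun i => (⟨C.canon (t i), h i⟩ : D.beta.U)) = Kleene.half := by
  constructor
  · rintro ⟨f, hsurj, hf⟩
    have hcan := embed_canon C D f hf
    constructor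
    · apply Set.eq_of_subset_of_subset
      · rintro c ⟨u, rfl⟩
        rw [← hcan u]
        exact (f u).2
      · rintro c hc
        obtain ⟨u, hu⟩ := hsurj ⟨c, hc⟩
        exact ⟨u, by rw [← hcan u, hu]⟩
    · intro p t h
      have key : (fun i => f (t i)) = (fun i => (⟨C.canon (t i), h i⟩ : D.beta.U)) := by
        funext i
        exact Subtype.ext (hcan (t i))
      have := hf p t
      rw [key] at this
      exact this
  · rintro ⟨h1, h2⟩
    have hmem : ∀ u : C.U, C.canon u ∈ Set.range D.canon := by
      intro u; rw [← h1]; exact Set.mem_range_self u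
    refine ⟨fun u => ⟨C.canon u, hmem u⟩, ?_, ?_⟩
    · rintro ⟨c, hc⟩
      rw [← h1] at hc
      obtain ⟨u, hu⟩ := hc
      exact ⟨u, Subtype.ext hu⟩
    · intro p t
      exact h2 p t (fun i => hmem (t i))
end

section
/- Repetition of a pattern from a common prefix between adjacent suffixes (correctness of merging loop iterations in CNLCP): let S be a list, l ≥ 1, m ≥ 0, and i a position with i + l + m ≤ |S|, and suppose S[i+k] = S[i+l+k] for every k < m. Then S[i+k] = S[i + (k mod l)] for every k < l + m; consequently, writing w = take l (drop i S), for every q with q·l ≤ m one has take l (drop (i + q·l) S) = w, so the length-l pattern w occurs ⌊m/l⌋ + 1 times consecutively in S starting at position i. -/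
/-- **Repetition of a pattern from a common prefix between adjacent suffixes (correctness
of merging loop iterations in CNLCP).** Let `S` be a list, `l ≥ 1`, `m ≥ 0`, and `i` a
position with `i + l + m ≤ |S|`, and suppose `S[i+k] = S[i+l+k]` for every `k < m`. Then
`S[i+k] = S[i + (k mod l)]` for every `k < l + m`; consequently, writing
`w = take l (drop i S)`, for every `q` with `q·l ≤ m` one has
`take l (drop (i + q·l) S) = w`, so the length-`l` pattern `w` occurs `⌊m/l⌋ + 1` times
consecutively in `S` starting at position `i`. -/
theorem cnlcp_pattern_repetition {α : Type*} (S : List α) (l m i : ℕ)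
    (hl : 1 ≤ l) (hlen : i + l + m ≤ S.length)
    (h : ∀ k : ℕ, k < m → S[i + k]? = S[i + l + k]?) :
    (∀ k : ℕ, k < l + m → S[i + k]? = S[i + k % l]?) ∧
    ∀ q : ℕ, q * l ≤ m →
      (S.drop (i + q * l)).take l = (S.drop i).take l := by
  have main : ∀ k : ℕ, k < l + m → S[i + k]? = S[i + k % l]? := by
    intro k
    induction k using Nat.strong_induction_on with
    | _ k ih =>
      intro hk
      by_cases hkl : k < l
      · rw [Nat.mod_eq_of_lt hkl]
      · push_neg at hkl
        have hkm : k - l < m := by omega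
        have h1 : S[i + (k - l)]? = S[i + k]? := by
          have := h (k - l) hkm
          rwa [show i + l + (k - l) = i + k by omega] at this
        have h2 := ih (k - l) (by omega) (by omega)
        have hmod : (k - l) % l = k % l := by
          conv_rhs => rw [show k = (k - l) + l by omega]
          rw [Nat.add_mod_right]
        rw [← h1, h2, hmod]
  refine ⟨main, fun q hq => ?_⟩
  apply List.ext_getElem?
  intro j
  rcases lt_or_ge j l with hj | hj
  · rw [List.getElem?_take_of_lt hj, List.getElem?_take_of_lt hj,
      List.getElem?_drop, List.getElem?_drop]
    have hk : q * l + j < l + m := by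
      rcases Nat.eq_zero_or_pos q with rfl | hq0
      · simpa using by omega
      · have : q * l ≥ l := Nat.le_mul_of_pos_left l hq0
        omega
    have h1 := main (q * l + j) hk
    have h2 := main j (by omega)
    have : (q * l + j) % l = j % l := by rw [Nat.add_comm, Nat.add_mul_mod_self_right]
    rw [show i + q * l + j = i + (q * l + j) by omega, h1, this, ← h2]
  · rw [List.getElem?_eq_none (by simpa using by omega),
      List.getElem?_eq_none (by simpa using by omega)]
end
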